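/- arXiv:2205.13059 — 2 statements merged into one kernel-verified Lean document; each statement's English description precedes it below -/
import Mathlib

section
/- Let Γ be a locally compact Hausdorff topological space, let φ be a flow on Γ, let S ⊆ Γ be an isolated invariant set of φ, and let A ⊆ S be an attractor in S. Then the complementary repeller A* := {x ∈ S | ω({x}) ∩ A = ∅} is a repeller in S, the pair (A, A*) is an attractor-repeller pair in S, and in particular (A*)* = A. -/
open Set

/-- A (continuous) flow on a topological space `Γ`. -/
def IsFlow {Γ : Type*} [TopologicalSpace Γ] (φ : Γ × ℝ → Γ) : Prop :=
  Continuous φ ∧ (∀ x, φ (x, 0) = x) ∧ ∀ (x : Γ) (s t : ℝ), φ (φ (x, s), t) = φ (x, s + t)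

/-- The maximal invariant subset of `U`. -/
def maxInv {Γ : Type*} (φ : Γ × ℝ → Γ) (U : Set Γ) : Set Γ :=
  {u | u ∈ U ∧ ∀ t : ℝ, φ (u, t) ∈ U}

/-- `U` is a compact (isolating) neighbourhood of `S` with `Inv U = S`. -/
def IsIsolatingNbhd {Γ : Type*} [TopologicalSpace Γ] (φ : Γ × ℝ → Γ) (U S : Set Γ) : Prop :=
  IsCompact U ∧ U ∈ nhdsSet S ∧ maxInv φ U = S

/-- `S` is an isolated invariant set of the flow `φ`. -/
def IsIsolatedInvariantSet {Γ : Type*} [TopologicalSpace Γ] (φ : Γ × ℝ → Γ) (S : Set Γ) : Prop :=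
  IsCompact S ∧ ∃ U : Set Γ, IsIsolatingNbhd φ U S

/-- `(M, N)` is an index pair for the isolated invariant set `S`. -/
def IsIndexPair {Γ : Type*} [TopologicalSpace Γ] (φ : Γ × ℝ → Γ) (S M N : Set Γ) : Prop :=
  IsCompact M ∧ IsCompact N ∧ N ⊆ M ∧
  IsIsolatingNbhd φ (closure (M \ N)) S ∧
  (∀ x ∈ N, ∀ t : ℝ, 0 ≤ t →
    (∀ s ∈ Icc (0 : ℝ) t, φ (x, s) ∈ M) → ∀ s ∈ Icc (0 : ℝ) t, φ (x, s) ∈ N) ∧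
  (∀ x ∈ M, ∀ t : ℝ, 0 ≤ t → φ (x, t) ∉ M → ∃ s ∈ Icc (0 : ℝ) t, φ (x, s) ∈ N)

/-- The ω-limit `ω(T)`: the maximal invariant set of the closure of the forward orbit of `T`. -/
def omegaSet {Γ : Type*} [TopologicalSpace Γ] (φ : Γ × ℝ → Γ) (T : Set Γ) : Set Γ :=
  maxInv φ (closure (φ '' (T ×ˢ Ici (0 : ℝ))))

/-- The ω*-limit `ω*(T)`: the maximal invariant set of the closure of the backward orbit of `T`. -/
def omegaStarSet {Γ : Type*} [TopologicalSpace Γ] (φ : Γ × ℝ → Γ) (T : Set Γ) : Set Γ :=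
  maxInv φ (closure (φ '' (T ×ˢ Iic (0 : ℝ))))

/-- `A` is an attractor in the isolated invariant set `S`: there is a neighbourhood `U` of `A`
in the subspace `S` with `A = ω(U)`. -/
def IsAttractorIn {Γ : Type*} [TopologicalSpace Γ] (φ : Γ × ℝ → Γ) (S A : Set Γ) : Prop :=
  A ⊆ S ∧ ∃ U : Set Γ, U ⊆ S ∧ (∃ V : Set Γ, IsOpen V ∧ A ⊆ V ∧ V ∩ S ⊆ U) ∧ omegaSet φ U = A

/-- `R` is a repeller in the isolated invariant set `S`: there is a neighbourhood `U` of `R`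
in the subspace `S` with `R = ω*(U)`. -/
def IsRepellerIn {Γ : Type*} [TopologicalSpace Γ] (φ : Γ × ℝ → Γ) (S R : Set Γ) : Prop :=
  R ⊆ S ∧ ∃ U : Set Γ, U ⊆ S ∧ (∃ V : Set Γ, IsOpen V ∧ R ⊆ V ∧ V ∩ S ⊆ U) ∧ omegaStarSet φ U = R

/-- The complementary repeller `A* = {x ∈ S | ω({x}) ∩ A = ∅}` of an attractor `A ⊆ S`. -/
def compRepeller {Γ : Type*} [TopologicalSpace Γ] (φ : Γ × ℝ → Γ) (S A : Set Γ) : Set Γ :=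
  {x ∈ S | omegaSet φ {x} ∩ A = ∅}

/-- The complementary attractor `R* = {x ∈ S | ω*({x}) ∩ R = ∅}` of a repeller `R ⊆ S`. -/
def compAttractor {Γ : Type*} [TopologicalSpace Γ] (φ : Γ × ℝ → Γ) (S R : Set Γ) : Set Γ :=
  {x ∈ S | omegaStarSet φ {x} ∩ R = ∅}

/-- `(A, R)` is an attractor-repeller pair in `S`. -/
def IsAttractorRepellerPair {Γ : Type*} [TopologicalSpace Γ] (φ : Γ × ℝ → Γ)
    (S A R : Set Γ) : Prop :=
  IsAttractorIn φ S A ∧ IsRepellerIn φ S R ∧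
    A = compAttractor φ S R ∧ R = compRepeller φ S A

/-!
The characterisation `A* = Inv(S \ V)`, for `V` an open set with `A ⊆ V` and `V ∩ S` inside
the attracting neighbourhood `U`, makes `A*` closed, invariant and disjoint from `A`. Compactness
gives a uniform time after which `U` lies in any given neighbourhood of `A`, and together with
continuity on a compact time interval this makes `A` stable: points of `S` close to `A` stay
forever in any given neighbourhood of `A`. Hence a backward orbit accumulating on `A` must start
in every neighbourhood of `A`. Applied to `S \ V'` for a small neighbourhood `V'` of `A` this
shows `ω*(S \ V') = A*`, and applied to a single point it shows `(A*)* ⊆ A`.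
-/

open Topology

section

variable {Γ : Type*} {φ : Γ × ℝ → Γ}

theorem maxInv_mono {K L : Set Γ} (h : K ⊆ L) : maxInv φ K ⊆ maxInv φ L :=
  fun _ hu => ⟨h hu.1, fun t => h (hu.2 t)⟩

variable [TopologicalSpace Γ]

theorem omegaSet_singleton_subset {K : Set Γ} (hK : IsClosed K) {z : Γ}
    (hz : z ∈ maxInv φ K) : omegaSet φ {z} ⊆ K := by
  refine fun a ha => closure_minimal ?_ hK ha.1
  rintro _ ⟨⟨_, t⟩, ⟨rfl, -⟩, rfl⟩
  exact hz.2 t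

theorem closure_image_prod_subset {S T : Set Γ} (hS : IsClosed S)
    (hSinv : ∀ x ∈ S, ∀ t : ℝ, φ (x, t) ∈ S) (hT : T ⊆ S) (I : Set ℝ) :
    closure (φ '' (T ×ˢ I)) ⊆ S := by
  refine closure_minimal ?_ hS
  rintro _ ⟨⟨x, t⟩, ⟨hx, -⟩, rfl⟩
  exact hSinv x (hT hx) t

namespace IsFlow

theorem continuous_flow_left (hφ : IsFlow φ) (t : ℝ) : Continuous fun u => φ (u, t) :=
  hφ.1.comp (continuous_id.prodMk continuous_const)

theorem flow_mem_maxInv (hφ : IsFlow φ) {K : Set Γ} {u : Γ} (hu : u ∈ maxInv φ K) (t : ℝ) :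
    φ (u, t) ∈ maxInv φ K :=
  ⟨hu.2 t, fun s => by rw [hφ.2.2]; exact hu.2 (t + s)⟩

theorem isClosed_maxInv (hφ : IsFlow φ) {K : Set Γ} (hK : IsClosed K) :
    IsClosed (maxInv φ K) := by
  have h : maxInv φ K = ⋂ t : ℝ, (fun u => φ (u, t)) ⁻¹' K := by
    ext u
    simp only [maxInv, mem_ofPred_eq, mem_iInter, mem_preimage, and_iff_right_iff_imp]
    intro hu
    simpa only [hφ.2.1] using hu 0
  rw [h]
  exact isClosed_iInter fun t => hK.preimage (hφ.continuous_flow_left t)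

theorem maxInv_subset_omegaStarSet (hφ : IsFlow φ) (T : Set Γ) :
    maxInv φ T ⊆ omegaStarSet φ T := by
  have h : ∀ x ∈ T, x ∈ closure (φ '' (T ×ˢ Iic 0)) := fun x hx =>
    subset_closure ⟨(x, 0), ⟨hx, mem_Iic.2 le_rfl⟩, hφ.2.1 x⟩
  exact fun x hx => ⟨h x hx.1, fun t => h _ (hx.2 t)⟩

theorem omegaSet_singleton_flow_subset (hφ : IsFlow φ) {T : Set Γ} {p : Γ} (hp : p ∈ T)
    {r : ℝ} (hr : 0 ≤ r) : omegaSet φ {φ (p, r)} ⊆ omegaSet φ T := by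
  refine maxInv_mono (closure_mono ?_)
  rintro _ ⟨⟨_, s⟩, ⟨rfl, hs⟩, rfl⟩
  exact ⟨(p, r + s), ⟨hp, add_nonneg hr hs⟩, (hφ.2.2 p r s).symm⟩

theorem flow_mem_closure_image_Ici (hφ : IsFlow φ) {T : Set Γ} {a : ℝ} {y : Γ}
    (hy : y ∈ closure (φ '' (T ×ˢ Ici a))) (t : ℝ) :
    φ (y, t) ∈ closure (φ '' (T ×ˢ Ici (a + t))) := by
  have hmaps : MapsTo (fun u => φ (u, t)) (φ '' (T ×ˢ Ici a)) (φ '' (T ×ˢ Ici (a + t))) := by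
    rintro _ ⟨⟨x, s⟩, ⟨hx, hs⟩, rfl⟩
    exact ⟨(x, s + t), ⟨hx, add_le_add_left hs t⟩, (hφ.2.2 x s t).symm⟩
  exact hmaps.closure (hφ.continuous_flow_left t) hy

theorem mem_omegaSet_of_forall_nat (hφ : IsFlow φ) {T : Set Γ} {y : Γ}
    (hy : ∀ n : ℕ, y ∈ closure (φ '' (T ×ˢ Ici (n : ℝ)))) : y ∈ omegaSet φ T := by
  refine ⟨by simpa using hy 0, fun t => ?_⟩
  obtain ⟨n, hn⟩ := exists_nat_ge (-t)
  refine closure_mono (image_mono (prod_mono_right (Ici_subset_Ici.2 ?_)))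
    (hφ.flow_mem_closure_image_Ici (hy n) t)
  linarith

theorem omegaSet_singleton_nonempty [T2Space Γ] (hφ : IsFlow φ) {S : Set Γ} (hS : IsCompact S)
    (hSinv : ∀ x ∈ S, ∀ t : ℝ, φ (x, t) ∈ S) {x : Γ} (hx : x ∈ S) :
    (omegaSet φ {x}).Nonempty := by
  obtain ⟨y, hy⟩ := IsCompact.nonempty_iInter_of_sequence_nonempty_isCompact_isClosed
    (fun n : ℕ => closure (φ '' ({x} ×ˢ Ici (n : ℝ))))
    (fun n => closure_mono (image_mono (prod_mono_right (Ici_subset_Ici.2 (by simp)))))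
    (fun n => ⟨φ (x, n), subset_closure ⟨(x, n), ⟨rfl, mem_Ici.2 le_rfl⟩, rfl⟩⟩)
    (hS.of_isClosed_subset isClosed_closure
      (closure_image_prod_subset hS.isClosed hSinv (singleton_subset_iff.2 hx) _))
    (fun _ => isClosed_closure)
  exact ⟨y, hφ.mem_omegaSet_of_forall_nat (mem_iInter.1 hy)⟩

theorem reverse (hφ : IsFlow φ) : IsFlow (fun p : Γ × ℝ => φ (p.1, -p.2)) :=
  ⟨hφ.1.comp (continuous_fst.prodMk continuous_snd.neg), by simpa using hφ.2.1,
    fun x s t => by simp only [hφ.2.2, neg_add]⟩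

theorem omegaStarSet_eq_omegaSet_reverse (T : Set Γ) :
    omegaStarSet φ T = omegaSet (fun p : Γ × ℝ => φ (p.1, -p.2)) T := by
  have himage : (fun p : Γ × ℝ => φ (p.1, -p.2)) '' (T ×ˢ Ici 0) = φ '' (T ×ˢ Iic 0) := by
    ext y
    constructor
    · rintro ⟨⟨x, s⟩, ⟨hx, hs⟩, rfl⟩
      exact ⟨(x, -s), ⟨hx, mem_Iic.2 (neg_nonpos.2 hs)⟩, rfl⟩
    · rintro ⟨⟨x, s⟩, ⟨hx, hs⟩, rfl⟩
      exact ⟨(x, -s), ⟨hx, mem_Ici.2 (neg_nonneg.2 hs)⟩, by simp⟩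
  ext u
  simp only [omegaSet, omegaStarSet, maxInv, himage, mem_ofPred_eq]
  exact and_congr_right fun _ => (Equiv.neg ℝ).forall_congr_right.symm

theorem omegaStarSet_singleton_nonempty [T2Space Γ] (hφ : IsFlow φ) {S : Set Γ}
    (hS : IsCompact S) (hSinv : ∀ x ∈ S, ∀ t : ℝ, φ (x, t) ∈ S) {x : Γ} (hx : x ∈ S) :
    (omegaStarSet φ {x}).Nonempty := by
  rw [omegaStarSet_eq_omegaSet_reverse]
  exact hφ.reverse.omegaSet_singleton_nonempty hS (fun y hy t => hSinv y hy (-t)) hx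

section

variable [T2Space Γ]

theorem exists_forall_flow_mem_of_omegaSet_subset (hφ : IsFlow φ) {S U W : Set Γ}
    (hS : IsCompact S) (hSinv : ∀ x ∈ S, ∀ t : ℝ, φ (x, t) ∈ S) (hUS : U ⊆ S) (hW : IsOpen W)
    (hωW : omegaSet φ U ⊆ W) : ∃ T : ℝ, ∀ u ∈ U, ∀ t, T ≤ t → φ (u, t) ∈ W := by
  by_contra! h
  set D : ℕ → Set Γ := fun n => closure (φ '' (U ×ˢ Ici (n : ℝ))) ∩ Wᶜ
  have hD_closed : ∀ n, IsClosed (D n) := fun n => isClosed_closure.inter hW.isClosed_compl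
  obtain ⟨y, hy⟩ := IsCompact.nonempty_iInter_of_sequence_nonempty_isCompact_isClosed D
    (fun n => inter_subset_inter_left _
      (closure_mono (image_mono (prod_mono_right (Ici_subset_Ici.2 (by simp))))))
    (fun n => by
      obtain ⟨u, hu, t, ht, htW⟩ := h n
      exact ⟨φ (u, t), subset_closure ⟨(u, t), ⟨hu, ht⟩, rfl⟩, htW⟩)
    (hS.of_isClosed_subset (hD_closed 0)
      (inter_subset_left.trans (closure_image_prod_subset hS.isClosed hSinv hUS _)))
    hD_closed
  have hyD : ∀ n, y ∈ D n := mem_iInter.1 hy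
  exact (hyD 0).2 (hωW (hφ.mem_omegaSet_of_forall_nat fun n => (hyD n).1))

theorem eventually_forall_flow_mem (hφ : IsFlow φ) {S U V W : Set Γ} (hS : IsCompact S)
    (hSinv : ∀ x ∈ S, ∀ t : ℝ, φ (x, t) ∈ S) (hUS : U ⊆ S) (hV : IsOpen V)
    (hVU : V ∩ S ⊆ U) (hW : IsOpen W) (hωW : omegaSet φ U ⊆ W) {a : Γ}
    (ha : a ∈ omegaSet φ U) (haV : a ∈ V) :
    ∀ᶠ b in 𝓝 a, b ∈ S → ∀ t, 0 ≤ t → φ (b, t) ∈ W := by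
  obtain ⟨T, hT⟩ := hφ.exists_forall_flow_mem_of_omegaSet_subset hS hSinv hUS hW hωW
  have htube : ∀ᶠ b in 𝓝 a, ∀ t ∈ Icc 0 T, φ (b, t) ∈ W :=
    isCompact_Icc.eventually_forall_of_forall_eventually (P := fun b t => φ (b, t) ∈ W)
      fun t _ => hφ.1.continuousAt.preimage_mem_nhds (hW.mem_nhds (hωW (hφ.flow_mem_maxInv ha t)))
  filter_upwards [htube, hV.mem_nhds haV] with b hb hbV hbS t ht
  rcases le_total t T with htT | hTt
  · exact hb t ⟨ht, htT⟩
  · exact hT b (hVU ⟨hbV, hbS⟩) t hTt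

theorem inter_nonempty_of_mem_closure_image_Iic (hφ : IsFlow φ) {S U V W T : Set Γ}
    (hS : IsCompact S) (hSinv : ∀ x ∈ S, ∀ t : ℝ, φ (x, t) ∈ S) (hUS : U ⊆ S) (hV : IsOpen V)
    (hVU : V ∩ S ⊆ U) (hW : IsOpen W) (hωW : omegaSet φ U ⊆ W) (hTS : T ⊆ S) {a : Γ}
    (ha : a ∈ omegaSet φ U) (haV : a ∈ V) (haT : a ∈ closure (φ '' (T ×ˢ Iic 0))) :
    (T ∩ W).Nonempty := by
  obtain ⟨_, hb, ⟨z, s⟩, ⟨hz, hs⟩, rfl⟩ := mem_closure_iff_nhds.1 haT _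
    (hφ.eventually_forall_flow_mem hS hSinv hUS hV hVU hW hωW ha haV)
  have hzW := hb (hSinv z (hTS hz) s) (-s) (neg_nonneg.2 hs)
  rw [hφ.2.2, add_neg_cancel, hφ.2.1] at hzW
  exact ⟨z, hz, hzW⟩

theorem compRepeller_eq_maxInv (hφ : IsFlow φ) {S U V A : Set Γ} (hS : IsCompact S)
    (hSinv : ∀ x ∈ S, ∀ t : ℝ, φ (x, t) ∈ S) (hV : IsOpen V) (hAV : A ⊆ V) (hVU : V ∩ S ⊆ U)
    (hωU : omegaSet φ U = A) : compRepeller φ S A = maxInv φ (S \ V) := by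
  have hmeets : ∀ x ∈ S, (omegaSet φ {x} ∩ A).Nonempty ↔ ∃ t, φ (x, t) ∈ V := by
    intro x hx
    constructor
    · rintro ⟨a, ha, haA⟩
      obtain ⟨_, hbV, ⟨_, t⟩, ⟨rfl, -⟩, rfl⟩ := mem_closure_iff.1 ha.1 V hV (hAV haA)
      exact ⟨t, hbV⟩
    · rintro ⟨t, htV⟩
      -- `φ (x, max t 0)` lies on the forward orbits of both `x` and `φ (x, t) ∈ U`
      have hq : φ (φ (x, t), max t 0 - t) = φ (x, max t 0) := by rw [hφ.2.2, add_sub_cancel]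
      obtain ⟨a, ha⟩ := hφ.omegaSet_singleton_nonempty hS hSinv (hSinv x hx (max t 0))
      refine ⟨a, hφ.omegaSet_singleton_flow_subset (mem_singleton x) (le_max_right t 0) ha,
        hωU ▸ ?_⟩
      rw [← hq] at ha
      exact hφ.omegaSet_singleton_flow_subset (hVU ⟨htV, hSinv x hx t⟩)
        (sub_nonneg.2 (le_max_left t 0)) ha
  ext x
  simp only [compRepeller, maxInv, mem_ofPred_eq, mem_sdiff]
  constructor
  · rintro ⟨hxS, hx⟩
    have hnot : ∀ t, φ (x, t) ∉ V := fun t htV =>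
      (hmeets x hxS).2 ⟨t, htV⟩ |>.ne_empty hx
    exact ⟨⟨hxS, by simpa only [hφ.2.1] using hnot 0⟩, fun t => ⟨hSinv x hxS t, hnot t⟩⟩
  · rintro ⟨⟨hxS, -⟩, hx⟩
    refine ⟨hxS, not_nonempty_iff_eq_empty.1 fun h => ?_⟩
    obtain ⟨t, htV⟩ := (hmeets x hxS).1 h
    exact (hx t).2 htV

end

end IsFlow

theorem IsIsolatedInvariantSet.flow_mem (hφ : IsFlow φ) {S : Set Γ}
    (hS : IsIsolatedInvariantSet φ S) {x : Γ} (hx : x ∈ S) (t : ℝ) : φ (x, t) ∈ S := by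
  obtain ⟨-, U, -, -, rfl⟩ := hS
  exact hφ.flow_mem_maxInv hx t

namespace IsAttractorIn

variable [T2Space Γ] {S A : Set Γ}

theorem compAttractor_compRepeller (hφ : IsFlow φ) (hS : IsIsolatedInvariantSet φ S)
    (hA : IsAttractorIn φ S A) : compAttractor φ S (compRepeller φ S A) = A := by
  have hSinv := fun x hx t => hS.flow_mem hφ (x := x) hx t
  obtain ⟨hAS, U, hUS, ⟨V, hV, hAV, hVU⟩, rfl⟩ := hA
  ext x
  constructor
  · rintro ⟨hxS, hxR⟩
    obtain ⟨z, hz⟩ := hφ.omegaStarSet_singleton_nonempty hS.1 hSinv hxS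
    have hzS : z ∈ S := closure_image_prod_subset hS.1.isClosed hSinv
      (singleton_subset_iff.2 hxS) _ hz.1
    have hzR : z ∉ compRepeller φ S (omegaSet φ U) := fun h =>
      eq_empty_iff_forall_notMem.1 hxR z ⟨hz, h⟩
    obtain ⟨a, ha, haA⟩ := nonempty_iff_ne_empty.2 fun h => hzR ⟨hzS, h⟩
    have hax : a ∈ closure (φ '' ({x} ×ˢ Iic 0)) := omegaSet_singleton_subset isClosed_closure hz ha
    by_contra hxA
    obtain ⟨_, rfl, hxx⟩ := hφ.inter_nonempty_of_mem_closure_image_Iic hS.1 hSinv hUS hV hVU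
      isOpen_compl_singleton (fun y hy => ne_of_mem_of_not_mem hy hxA)
      (singleton_subset_iff.2 hxS) haA (hAV haA) hax
    exact hxx rfl
  · intro hxA
    refine ⟨hAS hxA, eq_empty_of_forall_notMem fun z ⟨hz, hzR⟩ => ?_⟩
    have hzA : z ∈ omegaSet φ U :=
      closure_image_prod_subset (hφ.isClosed_maxInv isClosed_closure)
        (fun y hy t => hφ.flow_mem_maxInv hy t) (singleton_subset_iff.2 hxA) _ hz.1
    rw [hφ.compRepeller_eq_maxInv hS.1 hSinv hV hAV hVU rfl] at hzR
    exact hzR.1.2 (hAV hzA)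

theorem isRepellerIn_compRepeller (hφ : IsFlow φ) (hS : IsIsolatedInvariantSet φ S)
    (hA : IsAttractorIn φ S A) : IsRepellerIn φ S (compRepeller φ S A) := by
  have hSinv := fun x hx t => hS.flow_mem hφ (x := x) hx t
  obtain ⟨hAS, U, hUS, ⟨V, hV, hAV, hVU⟩, rfl⟩ := hA
  rw [hφ.compRepeller_eq_maxInv hS.1 hSinv hV hAV hVU rfl]
  have hA_cpt : IsCompact (omegaSet φ U) :=
    hS.1.of_isClosed_subset (hφ.isClosed_maxInv isClosed_closure) hAS
  have hR_cpt : IsCompact (maxInv φ (S \ V)) :=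
    hS.1.of_isClosed_subset (hφ.isClosed_maxInv (hS.1.isClosed.sdiff hV))
      (fun x hx => hx.1.1)
  obtain ⟨V₁, V₂, hV₁, hV₂, hAV₁, hRV₂, hV₁₂⟩ := SeparatedNhds.of_isCompact_isCompact hA_cpt hR_cpt
    (disjoint_left.2 fun x hxA hxR => hxR.1.2 (hAV hxA))
  refine ⟨fun x hx => hx.1.1, S \ (V ∩ V₁), sdiff_subset, ⟨V₂, hV₂, hRV₂, fun x hx =>
    ⟨hx.2, fun hxV₁ => disjoint_left.1 hV₁₂ hxV₁.2 hx.1⟩⟩, ?_⟩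
  refine Subset.antisymm (fun y hy => ?_) ((maxInv_mono
    (sdiff_subset_sdiff_right inter_subset_left)).trans (hφ.maxInv_subset_omegaStarSet _))
  have hyS : y ∈ S := closure_image_prod_subset hS.1.isClosed hSinv sdiff_subset _ hy.1
  rw [← hφ.compRepeller_eq_maxInv hS.1 hSinv hV hAV hVU rfl]
  refine ⟨hyS, not_nonempty_iff_eq_empty.1 fun ⟨a, ha, haA⟩ => ?_⟩
  obtain ⟨z, hzS, hzV⟩ := hφ.inter_nonempty_of_mem_closure_image_Iic hS.1 hSinv hUS hV hVU
    (hV.inter hV₁) (subset_inter hAV hAV₁) sdiff_subset haA (hAV haA)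
    (omegaSet_singleton_subset isClosed_closure hy ha)
  exact hzS.2 hzV

end IsAttractorIn

end

theorem compRepeller_isRepeller_and_pair_general
    {Γ : Type*} [TopologicalSpace Γ] [T2Space Γ]
    (φ : Γ × ℝ → Γ) (hφ : IsFlow φ) (S : Set Γ) (hS : IsIsolatedInvariantSet φ S)
    (A : Set Γ) (hA : IsAttractorIn φ S A) :
    IsRepellerIn φ S (compRepeller φ S A) ∧
    IsAttractorRepellerPair φ S A (compRepeller φ S A) ∧
    compAttractor φ S (compRepeller φ S A) = A := by
  have hR := hA.isRepellerIn_compRepeller hφ hS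
  have hAR := hA.compAttractor_compRepeller hφ hS
  exact ⟨hR, ⟨hA, hR, hAR.symm, rfl⟩, hAR⟩

/-- If `A` is an attractor in an isolated invariant set `S`, then its complementary repeller
`A*` is a repeller in `S`, `(A, A*)` is an attractor-repeller pair, and `(A*)* = A`. -/
theorem compRepeller_isRepeller_and_pair
    {Γ : Type*} [TopologicalSpace Γ] [LocallyCompactSpace Γ] [T2Space Γ]
    (φ : Γ × ℝ → Γ) (hφ : IsFlow φ) (S : Set Γ) (hS : IsIsolatedInvariantSet φ S)
    (A : Set Γ) (hA : IsAttractorIn φ S A) :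
    IsRepellerIn φ S (compRepeller φ S A) ∧
    IsAttractorRepellerPair φ S A (compRepeller φ S A) ∧
    compAttractor φ S (compRepeller φ S A) = A :=
  compRepeller_isRepeller_and_pair_general φ hφ S hS A hA
end

section
/- Let Γ be a locally compact Hausdorff topological space equipped with a continuous action of a compact Lie group G, let φ be a G-equivariant flow on Γ, let S ⊆ Γ be a G-invariant isolated invariant set, and let (A,R) be an attractor-repeller pair in S with A and R both G-invariant. Then there exists an index triple (L,M,N) for (A,R) in which L, M and N are all G-invariant: compact G-invariant sets N ⊆ M ⊆ L such that (L,M) is an index pair for R, (L,N) is an index pair for S, and (M,N) is an index pair for A. -/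
open Set

/-!
Thicken `S` to a compact `G`-invariant isolating neighbourhood `U`, and choose inside it a compact
`G`-invariant neighbourhood `K` of `S` so small that no orbit segment in `U` runs from `K` to the
frontier of `U` and back to `K`; such a `K` exists by a compactness argument over all compact
neighbourhoods of `S`. With `T` a time in which every orbit segment in `U` meets `interior K`,
`L` is the forward orbit of `K` inside `U` and `N` the set of points of `L` that leave
`interior U` within time `T`; then `(L, N)` is an index pair for `S`. For the attractor take a
compact `G`-invariant neighbourhood `KA` of `A` avoiding `R` and the closure of the set of points
trapped in `U` whose orbit closure misses `A`; the closure of the forward orbit of `KA` inside `U`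
then misses `R`, and `M = N ∪ closure (forward orbit of KA)` completes the triple. `G`-invariance
comes from equivariance, and from replacing each compact neighbourhood by the intersection of its
translates, which is still a neighbourhood because `G` is compact.
-/

open Filter Topology

section

variable {Γ : Type*} {φ : Γ × ℝ → Γ} {U V K C X : Set Γ} {x y : Γ} {s t : ℝ}

def reverseFlow (φ : Γ × ℝ → Γ) : Γ × ℝ → Γ := fun p => φ (p.1, -p.2)

@[simp]
theorem reverseFlow_apply (x : Γ) (t : ℝ) : reverseFlow φ (x, t) = φ (x, -t) := rfl

theorem reverseFlow_reverseFlow : reverseFlow (reverseFlow φ) = φ := by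
  funext ⟨x, t⟩
  simp

def IsFlowInvariant (φ : Γ × ℝ → Γ) (X : Set Γ) : Prop := ∀ x ∈ X, ∀ t : ℝ, φ (x, t) ∈ X

theorem maxInv_subset : maxInv φ U ⊆ U := fun _ hx => hx.1

theorem maxInv_mono_s7 (hUV : U ⊆ V) : maxInv φ U ⊆ maxInv φ V :=
  fun _ hx => ⟨hUV hx.1, fun t => hUV (hx.2 t)⟩

theorem IsFlowInvariant.subset_maxInv (hX : IsFlowInvariant φ X) (hXU : X ⊆ U) :
    X ⊆ maxInv φ U :=
  fun x hx => ⟨hXU hx, fun t => hXU (hX x hx t)⟩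

theorem maxInv_reverseFlow : maxInv (reverseFlow φ) U = maxInv φ U := by
  ext x
  refine and_congr_right fun _ => ⟨fun hx t => ?_, fun hx t => hx (-t)⟩
  simpa using hx (-t)

def StaysIn (φ : Γ × ℝ → Γ) (U : Set Γ) (x : Γ) (t : ℝ) : Prop :=
  ∀ s ∈ Icc (0 : ℝ) t, φ (x, s) ∈ U

theorem StaysIn.mono (hx : StaysIn φ U x t) (hst : s ≤ t) : StaysIn φ U x s :=
  fun u hu => hx u ⟨hu.1, hu.2.trans hst⟩

theorem StaysIn.mono_set (hx : StaysIn φ U x t) (hUV : U ⊆ V) : StaysIn φ V x t :=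
  fun u hu => hUV (hx u hu)

theorem not_staysIn_iff : ¬ StaysIn φ U x t ↔ ∃ s ∈ Icc (0 : ℝ) t, φ (x, s) ∉ U := by
  simp [StaysIn, and_assoc]

theorem staysIn_iff_forall_mul (ht : 0 ≤ t) :
    StaysIn φ U x t ↔ ∀ σ ∈ Icc (0 : ℝ) 1, φ (x, σ * t) ∈ U := by
  refine ⟨fun hx σ hσ => hx _ ⟨mul_nonneg hσ.1 ht, mul_le_of_le_one_left ht hσ.2⟩,
    fun hx s hs => ?_⟩
  rcases ht.eq_or_lt with rfl | ht
  · simpa [le_antisymm hs.2 hs.1] using hx 0 ⟨le_rfl, zero_le_one⟩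
  · simpa [div_mul_cancel₀ s ht.ne'] using
      hx (s / t) ⟨div_nonneg hs.1 ht.le, (div_le_one ht).2 hs.2⟩

def forwardOrbitIn (φ : Γ × ℝ → Γ) (U K : Set Γ) : Set Γ :=
  {y | ∃ x ∈ K, ∃ t, 0 ≤ t ∧ StaysIn φ U x t ∧ φ (x, t) = y}

def backwardOrbitIn (φ : Γ × ℝ → Γ) (U K : Set Γ) : Set Γ := forwardOrbitIn (reverseFlow φ) U K

theorem forwardOrbitIn_subset : forwardOrbitIn φ U K ⊆ U := by
  rintro _ ⟨x, -, t, ht, hxt, rfl⟩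
  exact hxt t ⟨ht, le_rfl⟩

theorem forwardOrbitIn_mono {K' : Set Γ} (hK : K ⊆ K') :
    forwardOrbitIn φ U K ⊆ forwardOrbitIn φ U K' := by
  rintro _ ⟨x, hx, t, ht, hxt, rfl⟩
  exact ⟨x, hK hx, t, ht, hxt, rfl⟩

theorem backwardOrbitIn_mono {K' : Set Γ} (hK : K ⊆ K') :
    backwardOrbitIn φ U K ⊆ backwardOrbitIn φ U K' :=
  forwardOrbitIn_mono hK

section GInvariant

def IsGInvariant (G : Type*) [SMul G Γ] (X : Set Γ) : Prop := ∀ g : G, ∀ x ∈ X, g • x ∈ X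

variable {G : Type*} [Group G] [MulAction G Γ] {Y : Set Γ}

protected theorem IsGInvariant.union (hX : IsGInvariant G X) (hY : IsGInvariant G Y) :
    IsGInvariant G (X ∪ Y) :=
  fun g x hx => hx.imp (hX g x) (hY g x)

protected theorem IsGInvariant.diff (hX : IsGInvariant G X) (hY : IsGInvariant G Y) :
    IsGInvariant G (X \ Y) :=
  fun g x hx => ⟨hX g x hx.1, fun hgx => hx.2 (by simpa using hY g⁻¹ _ hgx)⟩

theorem IsGInvariant.setOf_staysIn (hequiv : ∀ (g : G) (x : Γ) (t : ℝ), φ (g • x, t) = g • φ (x, t))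
    (hV : IsGInvariant G V) : IsGInvariant G {x | StaysIn φ V x t} :=
  fun g x hx s hs => by
    rw [hequiv]
    exact hV g _ (hx s hs)

protected theorem IsGInvariant.forwardOrbitIn
    (hequiv : ∀ (g : G) (x : Γ) (t : ℝ), φ (g • x, t) = g • φ (x, t))
    (hU : IsGInvariant G U) (hK : IsGInvariant G K) : IsGInvariant G (forwardOrbitIn φ U K) := by
  rintro g _ ⟨x, hx, t, ht, hxt, rfl⟩
  exact ⟨g • x, hK g x hx, t, ht, hU.setOf_staysIn hequiv g x hxt, hequiv g x t⟩

end GInvariant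

variable [TopologicalSpace Γ]

namespace IsFlow

theorem continuous_apply (h : IsFlow φ) (t : ℝ) : Continuous fun x => φ (x, t) :=
  h.1.comp (continuous_id.prodMk continuous_const)

theorem continuous_orbit (h : IsFlow φ) (x : Γ) : Continuous fun t => φ (x, t) :=
  h.1.comp (continuous_const.prodMk continuous_id)

theorem map_zero (h : IsFlow φ) (x : Γ) : φ (x, 0) = x := h.2.1 x

theorem map_map (h : IsFlow φ) (x : Γ) (s t : ℝ) : φ (φ (x, s), t) = φ (x, s + t) := h.2.2 x s t

theorem map_map_neg (h : IsFlow φ) (x : Γ) (t : ℝ) : φ (φ (x, t), -t) = x := by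
  rw [h.map_map, add_neg_cancel, h.map_zero]

theorem mem_of_mapClusterPt {ι : Type*} {l : Filter ι} {u : ι → Γ} (h : IsFlow φ)
    (hy : MapClusterPt y l u) (hC : IsClosed C) (hu : ∀ᶠ i in l, φ (u i, t) ∈ C) :
    φ (y, t) ∈ C :=
  hC.mem_of_mapClusterPt
    (MapClusterPt.continuousAt_comp (f := fun x => φ (x, t)) (h.continuous_apply t).continuousAt hy)
    hu

protected theorem reverseFlow (h : IsFlow φ) : IsFlow (reverseFlow φ) :=
  ⟨h.1.comp (continuous_fst.prodMk continuous_snd.neg), fun x => by simp [h.map_zero],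
    fun x s t => by simp [h.map_map, add_comm]⟩

end IsFlow

theorem IsFlowInvariant.mem_of_map_mem (hX : IsFlowInvariant φ X) (h : IsFlow φ)
    (hx : φ (x, t) ∈ X) : x ∈ X := by
  simpa [h.map_map_neg] using hX _ hx (-t)

theorem isFlowInvariant_maxInv (h : IsFlow φ) : IsFlowInvariant φ (maxInv φ U) :=
  fun x hx s => ⟨hx.2 s, fun t => by rw [h.map_map]; exact hx.2 _⟩

theorem isClosed_maxInv (h : IsFlow φ) (hU : IsClosed U) : IsClosed (maxInv φ U) := by
  have : maxInv φ U = U ∩ ⋂ t : ℝ, (fun x => φ (x, t)) ⁻¹' U := by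
    ext x
    simp [maxInv]
  rw [this]
  exact hU.inter (isClosed_iInter fun t => hU.preimage (h.continuous_apply t))

theorem mem_maxInv_of_nonneg (h : IsFlow φ) (hfwd : ∀ t, 0 ≤ t → φ (x, t) ∈ U)
    (hbwd : ∀ t, 0 ≤ t → φ (x, -t) ∈ U) : x ∈ maxInv φ U := by
  refine ⟨by simpa [h.map_zero] using hfwd 0 le_rfl, fun t => ?_⟩
  rcases le_total 0 t with ht | ht
  · exact hfwd t ht
  · simpa using hbwd (-t) (neg_nonneg.2 ht)

theorem isIsolatingNbhd_closure {S : Set Γ} (hV : IsCompact (closure V)) (hSV : V ∈ 𝓝ˢ S)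
    (hS : IsFlowInvariant φ S) (hmax : maxInv φ (closure V) ⊆ S) :
    IsIsolatingNbhd φ (closure V) S :=
  ⟨hV, mem_of_superset hSV subset_closure,
    hmax.antisymm (hS.subset_maxInv ((subset_of_mem_nhdsSet hSV).trans subset_closure))⟩

theorem omegaSet_singleton_subset_s7 (hC : IsClosed C) (hx : ∀ t, 0 ≤ t → φ (x, t) ∈ C) :
    omegaSet φ {x} ⊆ C :=
  maxInv_subset.trans <| closure_minimal (by rintro _ ⟨⟨_, t⟩, ⟨rfl, ht⟩, rfl⟩; exact hx t ht) hC

theorem omegaSet_singleton_nonempty (h : IsFlow φ) (hC : IsCompact C)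
    (hx : ∀ t, 0 ≤ t → φ (x, t) ∈ C) : (omegaSet φ {x}).Nonempty := by
  obtain ⟨q, -, hq⟩ := hC.exists_mapClusterPt (f := atTop) (u := fun n : ℕ => φ (x, n))
    (tendsto_principal.2 (Eventually.of_forall fun n => hx n n.cast_nonneg))
  have hqt : ∀ t, φ (q, t) ∈ closure (φ '' ({x} ×ˢ Ici 0)) := fun t =>
    h.mem_of_mapClusterPt hq isClosed_closure
      ((tendsto_natCast_atTop_atTop.eventually_ge_atTop (-t)).mono fun n hn => by
        rw [h.map_map]
        exact subset_closure ⟨(x, n + t), ⟨rfl, by simp only [mem_Ici]; linarith⟩, rfl⟩)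
  exact ⟨q, by simpa [h.map_zero] using hqt 0, hqt⟩

section StaysIn

theorem staysIn_zero (h : IsFlow φ) : StaysIn φ U x 0 ↔ x ∈ U :=
  ⟨fun hx => by simpa [h.map_zero] using hx 0 ⟨le_rfl, le_rfl⟩,
    fun hx s hs => by rwa [le_antisymm hs.2 hs.1, h.map_zero]⟩

theorem StaysIn.shift (hx : StaysIn φ U x t) (h : IsFlow φ) (hs : s ∈ Icc 0 t) :
    StaysIn φ U (φ (x, s)) (t - s) := fun u hu => by
  rw [h.map_map]
  exact hx _ ⟨by linarith [hs.1, hu.1], by linarith [hu.2]⟩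

theorem StaysIn.append (hx : StaysIn φ U x s) (h : IsFlow φ)
    (hxs : StaysIn φ U (φ (x, s)) t) : StaysIn φ U x (s + t) := fun u hu => by
  rcases le_total u s with hus | hsu
  · exact hx u ⟨hu.1, hus⟩
  · simpa [h.map_map] using hxs (u - s) ⟨sub_nonneg.2 hsu, by linarith [hu.2]⟩

theorem isClosed_staysIn (h : IsFlow φ) (hU : IsClosed U) :
    IsClosed {p : Γ × ℝ | 0 ≤ p.2 ∧ StaysIn φ U p.1 p.2} := by
  have : {p : Γ × ℝ | 0 ≤ p.2 ∧ StaysIn φ U p.1 p.2} =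
      {p | 0 ≤ p.2} ∩ ⋂ σ ∈ Icc (0 : ℝ) 1, (fun p : Γ × ℝ => φ (p.1, σ * p.2)) ⁻¹' U := by
    ext ⟨x, t⟩
    simp only [mem_ofPred_eq, mem_inter_iff, mem_iInter, mem_preimage]
    exact and_congr_right staysIn_iff_forall_mul
  rw [this]
  exact (isClosed_le continuous_const continuous_snd).inter <| isClosed_biInter fun σ _ =>
    hU.preimage (h.1.comp (continuous_fst.prodMk (continuous_const.mul continuous_snd)))

theorem isClosed_setOf_staysIn_time (h : IsFlow φ) (hU : IsClosed U) (x : Γ) :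
    IsClosed {t | 0 ≤ t ∧ StaysIn φ U x t} :=
  (isClosed_staysIn h hU).preimage (continuous_const.prodMk continuous_id)

theorem isOpen_setOf_staysIn (h : IsFlow φ) (hV : IsOpen V) (t : ℝ) :
    IsOpen {x | StaysIn φ V x t} :=
  isOpen_iff_mem_nhds.2 fun _ hx => isCompact_Icc.eventually_forall_of_forall_eventually
    fun s hs => h.1.continuousAt.preimage_mem_nhds (hV.mem_nhds (hx s hs))

theorem exists_last_mem (h : IsFlow φ) (hC : IsClosed C) (hx : x ∈ C) (ht : 0 ≤ t) :
    ∃ σ ∈ Icc 0 t, φ (x, σ) ∈ C ∧ ∀ s ∈ Ioc σ t, φ (x, s) ∉ C := by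
  obtain ⟨σ, ⟨hσ, hσC⟩, hmax⟩ :=
    (isCompact_Icc.inter_right (hC.preimage (h.continuous_orbit x))).exists_isGreatest
      ⟨0, ⟨le_rfl, ht⟩, by rwa [mem_preimage, h.map_zero]⟩
  exact ⟨σ, hσ, hσC, fun s hs hsC => (hmax ⟨⟨hσ.1.trans hs.1.le, hs.2⟩, hsC⟩).not_gt hs.1⟩

theorem exists_exit_time {t₀ : ℝ} (h : IsFlow φ) (hC : IsClosed C) (ht₀ : 0 ≤ t₀)
    (hx : StaysIn φ C x t₀) (hxt : ¬ StaysIn φ C x t) :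
    ∃ e ∈ Icc t₀ t, StaysIn φ C x e ∧ φ (x, e) ∉ interior C := by
  have ht₀t : t₀ ≤ t := le_of_not_ge fun htt₀ => hxt (hx.mono htt₀)
  obtain ⟨e, ⟨he, -, hxe⟩, hmax⟩ :=
    (isCompact_Icc.inter_right (isClosed_setOf_staysIn_time h hC x)).exists_isGreatest
      ⟨t₀, ⟨le_rfl, ht₀t⟩, ht₀, hx⟩
  refine ⟨e, he, hxe, fun hint => ?_⟩
  have het : e < t := he.2.lt_of_ne fun het => hxt (het ▸ hxe)
  obtain ⟨ε, hε, hball⟩ := Metric.mem_nhds_iff.1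
    ((isOpen_interior.preimage (h.continuous_orbit x)).mem_nhds hint)
  have hδ : 0 < min (ε / 2) (t - e) := lt_min (half_pos hε) (sub_pos.2 het)
  have hmem : e + min (ε / 2) (t - e) ∈ Icc t₀ t ∩ {t | 0 ≤ t ∧ StaysIn φ C x t} := by
    refine ⟨⟨by linarith [he.1], by linarith [min_le_right (ε / 2) (t - e)]⟩,
      by linarith [he.1], fun s hs => ?_⟩
    rcases le_total s e with hse | hes
    · exact hxe s ⟨hs.1, hse⟩
    · refine interior_subset (hball ?_)
      rw [Real.ball_eq_Ioo]
      constructor <;> linarith [hs.2, min_le_left (ε / 2) (t - e)]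
  linarith [hmax hmem]

end StaysIn

section Orbits

theorem subset_forwardOrbitIn (h : IsFlow φ) (hKU : K ⊆ U) : K ⊆ forwardOrbitIn φ U K :=
  fun x hx => ⟨x, hx, 0, le_rfl, (staysIn_zero h).2 (hKU hx), h.map_zero x⟩

theorem staysIn_forwardOrbitIn (h : IsFlow φ) (hy : y ∈ forwardOrbitIn φ U K)
    (hyt : StaysIn φ U y t) : StaysIn φ (forwardOrbitIn φ U K) y t := by
  obtain ⟨x, hx, t₀, ht₀, hxt₀, rfl⟩ := hy
  exact fun s hs => ⟨x, hx, t₀ + s, by linarith [hs.1], hxt₀.append h (hyt.mono hs.2),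
    (h.map_map x t₀ s).symm⟩

theorem mem_backwardOrbitIn (h : IsFlow φ) :
    x ∈ backwardOrbitIn φ U K ↔ ∃ t, 0 ≤ t ∧ StaysIn φ U x t ∧ φ (x, t) ∈ K := by
  constructor
  · rintro ⟨k, hk, t, ht, hkt, rfl⟩
    refine ⟨t, ht, fun s hs => ?_, by simpa [h.map_map, h.map_zero] using hk⟩
    simpa [h.map_map, neg_add_eq_sub] using hkt (t - s) ⟨by linarith [hs.2], by linarith [hs.1]⟩
  · rintro ⟨t, ht, hxt, hk⟩
    refine ⟨φ (x, t), hk, t, ht, fun s hs => ?_, by simp [h.map_map, h.map_zero]⟩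
    simpa [h.map_map, ← sub_eq_add_neg] using hxt (t - s) ⟨by linarith [hs.2], by linarith [hs.1]⟩

theorem map_mem_closure_forwardOrbitIn (h : IsFlow φ) (hx : x ∈ closure (forwardOrbitIn φ U K))
    (ht : 0 ≤ t) (hxt : StaysIn φ (interior U) x t) :
    φ (x, t) ∈ closure (forwardOrbitIn φ U K) := by
  have hx' : x ∈ closure ({x | StaysIn φ (interior U) x t} ∩ forwardOrbitIn φ U K) :=
    (isOpen_setOf_staysIn h isOpen_interior t).inter_closure ⟨hxt, hx⟩
  exact map_mem_closure (f := fun x => φ (x, t)) (h.continuous_apply t) hx' fun y hy =>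
    staysIn_forwardOrbitIn h hy.2 (hy.1.mono_set interior_subset) t ⟨ht, le_rfl⟩

theorem isCompact_forwardOrbitIn_Icc (h : IsFlow φ) (hU : IsClosed U) (hK : IsCompact K)
    (T : ℝ) : IsCompact {y | ∃ x ∈ K, ∃ t ∈ Icc 0 T, StaysIn φ U x t ∧ φ (x, t) = y} := by
  have : {y | ∃ x ∈ K, ∃ t ∈ Icc 0 T, StaysIn φ U x t ∧ φ (x, t) = y} =
      φ '' ((K ×ˢ Icc 0 T) ∩ {p | 0 ≤ p.2 ∧ StaysIn φ U p.1 p.2}) := by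
    ext y
    constructor
    · rintro ⟨x, hx, t, ht, hxt, rfl⟩
      exact ⟨(x, t), ⟨⟨hx, ht⟩, ht.1, hxt⟩, rfl⟩
    · rintro ⟨⟨x, t⟩, ⟨⟨hx, ht⟩, -, hxt⟩, rfl⟩
      exact ⟨x, hx, t, ht, hxt, rfl⟩
  rw [this]
  exact ((hK.prod isCompact_Icc).inter_right (isClosed_staysIn h hU)).image h.1

end Orbits

theorem exists_crossing_time (h : IsFlow φ) (hU : IsCompact U) (hUc : IsClosed U) (hV : IsOpen V)
    (hUV : maxInv φ U ⊆ V) : ∃ T > 0, ∀ x, StaysIn φ U x T → ∃ s ∈ Icc 0 T, φ (x, s) ∈ V := by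
  by_contra! hcon
  choose x hxU hxV using fun n : ℕ => hcon (2 * ((n : ℝ) + 1)) (by positivity)
  -- the midpoints of these segments have two-sided orbit segments in `U \ V` of length `n + 1`
  have hmid : ∀ (n : ℕ) (s : ℝ), |s| ≤ n + 1 → φ (φ (x n, n + 1), s) ∈ U \ V := by
    intro n s hs
    rw [abs_le] at hs
    have hs' : (n + 1 + s : ℝ) ∈ Icc 0 (2 * ((n : ℝ) + 1)) := ⟨by linarith, by linarith⟩
    rw [h.map_map]
    exact ⟨hxU n _ hs', hxV n _ hs'⟩
  obtain ⟨y, -, hy⟩ := hU.exists_mapClusterPt (f := atTop) (u := fun n : ℕ => φ (x n, n + 1))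
    (tendsto_principal.2 (Eventually.of_forall fun n => by
      simpa [h.map_zero] using (hmid n 0 (by simp only [abs_zero]; positivity)).1))
  have hyUV : ∀ s, φ (y, s) ∈ U \ V := fun s => h.mem_of_mapClusterPt hy (hUc.sdiff hV)
    ((tendsto_natCast_atTop_atTop.eventually_ge_atTop |s|).mono fun n hn => hmid n s (by linarith))
  have hy0 := hyUV 0
  rw [h.map_zero] at hy0
  exact hy0.2 (hUV ⟨hy0.1, fun s => (hyUV s).1⟩)

theorem isCompact_forwardOrbitIn (h : IsFlow φ) (hU : IsCompact U) (hUc : IsClosed U)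
    (hK : IsCompact K) (hUK : maxInv φ U ⊆ interior K) : IsCompact (forwardOrbitIn φ U K) := by
  obtain ⟨T, -, hT⟩ := exists_crossing_time h.reverseFlow hU hUc isOpen_interior
    (by rwa [maxInv_reverseFlow])
  convert isCompact_forwardOrbitIn_Icc h hUc hK T using 1
  ext y
  constructor
  · rintro ⟨x, hx, t, ht, hxt, rfl⟩
    by_cases htT : t ≤ T
    · exact ⟨x, hx, t, ⟨ht, htT⟩, hxt, rfl⟩
    -- a long segment ending at `y` passes through `interior K` during its last `T` time units
    obtain ⟨s, hs, hsK⟩ := hT (φ (x, t)) fun s hs => by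
      rw [reverseFlow_apply, h.map_map]
      exact hxt _ ⟨by linarith [hs.2], by linarith [hs.1]⟩
    rw [reverseFlow_apply, h.map_map] at hsK
    refine ⟨φ (x, t + -s), interior_subset hsK, s, hs, fun u hu => ?_, by
      rw [h.map_map, neg_add_cancel_right]⟩
    rw [h.map_map]
    exact hxt _ ⟨by linarith [hs.2, hu.1], by linarith [hu.2]⟩
  · rintro ⟨x, hx, t, ht, hxt, rfl⟩
    exact ⟨x, hx, t, ht.1, hxt, rfl⟩

theorem isCompact_backwardOrbitIn (h : IsFlow φ) (hU : IsCompact U) (hUc : IsClosed U)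
    (hK : IsCompact K) (hUK : maxInv φ U ⊆ interior K) : IsCompact (backwardOrbitIn φ U K) :=
  isCompact_forwardOrbitIn h.reverseFlow hU hUc hK (by rwa [maxInv_reverseFlow])

theorem IsCompact.inter_nonempty_of_forall_compact_nhds [LocallyCompactSpace Γ] [T2Space Γ]
    {F S W : Set Γ} (hF : IsCompact F) (hS : IsCompact S) (hW : IsOpen W) (hSW : S ⊆ W)
    (hFK : ∀ K, IsCompact K → S ⊆ interior K → K ⊆ W → (F ∩ K).Nonempty) : (F ∩ S).Nonempty := by
  by_contra hFS
  obtain ⟨K, hK, hSK, hKW⟩ := exists_compact_between hS (hW.inter hF.isClosed.isOpen_compl)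
    fun x hx => ⟨hSW hx, fun hxF => hFS ⟨x, hxF, hx⟩⟩
  obtain ⟨x, hxF, hxK⟩ := hFK K hK hSK fun x hx => (hKW hx).1
  exact (hKW hxK).2 hxF

def NoReturn (φ : Γ × ℝ → Γ) (U K : Set Γ) : Prop :=
  Disjoint (forwardOrbitIn φ U K \ interior U) (backwardOrbitIn φ U K)

theorem NoReturn.mono {K' : Set Γ} (hK : NoReturn φ U K) (hK' : K' ⊆ K) : NoReturn φ U K' :=
  Disjoint.mono (sdiff_subset_sdiff_left (forwardOrbitIn_mono hK')) (backwardOrbitIn_mono hK') hK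

section NoReturn

variable [LocallyCompactSpace Γ] [T2Space Γ] {W : Set Γ} {p : Γ}

theorem mem_maxInv_of_exit {t₀ : ℝ} (h : IsFlow φ) (hU : IsCompact U) (hW : IsOpen W)
    (hUW : maxInv φ U ⊆ W) (ht₀ : 0 ≤ t₀) (hexit : φ (p, t₀) ∉ U)
    (hp : ∀ K, IsCompact K → maxInv φ U ⊆ interior K → K ⊆ W → p ∈ backwardOrbitIn φ U K) :
    p ∈ maxInv φ U := by
  have hF : IsCompact ((fun t => φ (p, t)) '' (Icc 0 t₀ ∩ {t | 0 ≤ t ∧ StaysIn φ U p t})) :=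
    (isCompact_Icc.inter_right (isClosed_setOf_staysIn_time h hU.isClosed p)).image
      (h.continuous_orbit p)
  obtain ⟨_, ⟨t, -, rfl⟩, hpt⟩ := hF.inter_nonempty_of_forall_compact_nhds
    (hU.of_isClosed_subset (isClosed_maxInv h hU.isClosed) maxInv_subset) hW hUW
    fun K hK hSK hKW => by
      obtain ⟨t, ht, hpt, hptK⟩ := (mem_backwardOrbitIn h).1 (hp K hK hSK hKW)
      have htt₀ : t ≤ t₀ := le_of_not_gt fun htt₀ => hexit (hpt t₀ ⟨ht₀, htt₀.le⟩)
      exact ⟨φ (p, t), ⟨t, ⟨⟨ht, htt₀⟩, ht, hpt⟩, rfl⟩, hptK⟩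
  exact (isFlowInvariant_maxInv h).mem_of_map_mem h hpt

theorem mem_maxInv_of_forall_mem_orbitIn (h : IsFlow φ) (hU : IsCompact U) (hW : IsOpen W)
    (hUW : maxInv φ U ⊆ W) (hp : ∀ K, IsCompact K → maxInv φ U ⊆ interior K → K ⊆ W →
      p ∈ forwardOrbitIn φ U K ∧ p ∈ backwardOrbitIn φ U K) :
    p ∈ maxInv φ U := by
  by_cases hfwd : ∃ t, 0 ≤ t ∧ φ (p, t) ∉ U
  · obtain ⟨t, ht, hpt⟩ := hfwd
    exact mem_maxInv_of_exit h hU hW hUW ht hpt fun K hK hSK hKW => (hp K hK hSK hKW).2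
  by_cases hbwd : ∃ t, 0 ≤ t ∧ φ (p, -t) ∉ U
  · obtain ⟨t, ht, hpt⟩ := hbwd
    rw [← maxInv_reverseFlow] at hUW hp ⊢
    refine mem_maxInv_of_exit h.reverseFlow hU hW hUW ht hpt fun K hK hSK hKW => ?_
    rw [backwardOrbitIn, reverseFlow_reverseFlow]
    exact (hp K hK hSK hKW).1
  push Not at hfwd hbwd
  exact mem_maxInv_of_nonneg h hfwd hbwd

theorem exists_noReturn (h : IsFlow φ) (hU : IsCompact U) (hUU : maxInv φ U ⊆ interior U) :
    ∃ K, IsCompact K ∧ maxInv φ U ⊆ interior K ∧ K ⊆ interior U ∧ NoReturn φ U K := by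
  have hS : IsCompact (maxInv φ U) :=
    hU.of_isClosed_subset (isClosed_maxInv h hU.isClosed) maxInv_subset
  by_contra! hcon
  let ι := {K : Set Γ // IsCompact K ∧ maxInv φ U ⊆ interior K ∧ K ⊆ interior U}
  let B : ι → Set Γ := fun K => (forwardOrbitIn φ U K.1 \ interior U) ∩ backwardOrbitIn φ U K.1
  have hBmono {K K' : ι} (hKK' : K.1 ⊆ K'.1) : B K ⊆ B K' :=
    inter_subset_inter (sdiff_subset_sdiff_left (forwardOrbitIn_mono hKK'))
      (backwardOrbitIn_mono hKK')
  have hB (K : ι) : IsClosed (B K) :=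
    ((isCompact_forwardOrbitIn h hU hU.isClosed K.2.1 K.2.2.1).isClosed.sdiff
      isOpen_interior).inter (isCompact_backwardOrbitIn h hU hU.isClosed K.2.1 K.2.2.1).isClosed
  obtain ⟨K₀, hK₀, hSK₀, hK₀U⟩ := exists_compact_between hS isOpen_interior hUU
  have : Nonempty ι := ⟨⟨K₀, hK₀, hSK₀, hK₀U⟩⟩
  have hdir : Directed (· ⊇ ·) B := fun K₁ K₂ => by
    obtain ⟨K, hK, hSK, hK₁₂⟩ := exists_compact_between hS (isOpen_interior.inter isOpen_interior)
      (subset_inter K₁.2.2.1 K₂.2.2.1)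
    have hK₁ : K ⊆ K₁.1 := fun x hx => interior_subset (hK₁₂ hx).1
    have hK₂ : K ⊆ K₂.1 := fun x hx => interior_subset (hK₁₂ hx).2
    exact ⟨⟨K, hK, hSK, hK₁.trans K₁.2.2.2⟩, hBmono hK₁, hBmono hK₂⟩
  obtain ⟨p, hp⟩ := IsCompact.nonempty_iInter_of_directed_nonempty_isCompact_isClosed B hdir
    (fun K => not_disjoint_iff_nonempty_inter.1 (hcon K.1 K.2.1 K.2.2.1 K.2.2.2))
    (fun K => hU.of_isClosed_subset (hB K) fun x hx => forwardOrbitIn_subset hx.1.1) hB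
  have hpB (K : ι) : p ∈ B K := mem_iInter.1 hp K
  refine (hpB ⟨K₀, hK₀, hSK₀, hK₀U⟩).1.2 (hUU ?_)
  exact mem_maxInv_of_forall_mem_orbitIn h hU isOpen_interior hUU fun K hK hSK hKU =>
    ⟨(hpB ⟨K, hK, hSK, hKU⟩).1.1, (hpB ⟨K, hK, hSK, hKU⟩).2⟩

end NoReturn

section AttractorRepeller

variable {S A R : Set Γ} {z : Γ}

theorem IsAttractorIn.isFlowInvariant (hA : IsAttractorIn φ S A) (h : IsFlow φ) :
    IsFlowInvariant φ A := by
  obtain ⟨-, U, -, -, rfl⟩ := hA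
  exact isFlowInvariant_maxInv h

theorem IsAttractorIn.isClosed (hA : IsAttractorIn φ S A) (h : IsFlow φ) : IsClosed A := by
  obtain ⟨-, U, -, -, rfl⟩ := hA
  exact isClosed_maxInv h isClosed_closure

theorem IsRepellerIn.isFlowInvariant (hR : IsRepellerIn φ S R) (h : IsFlow φ) :
    IsFlowInvariant φ R := by
  obtain ⟨-, U, -, -, rfl⟩ := hR
  exact isFlowInvariant_maxInv h

theorem IsRepellerIn.isClosed (hR : IsRepellerIn φ S R) (h : IsFlow φ) : IsClosed R := by
  obtain ⟨-, U, -, -, rfl⟩ := hR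
  exact isClosed_maxInv h isClosed_closure

theorem mem_compAttractor_of_map_neg_mem (hz : z ∈ S) (hC : IsClosed C) (hCR : Disjoint C R)
    (hzC : ∀ t, 0 ≤ t → φ (z, -t) ∈ C) : z ∈ compAttractor φ S R := by
  refine ⟨hz, (hCR.mono_left (maxInv_subset.trans (closure_minimal ?_ hC))).inter_eq⟩
  rintro _ ⟨⟨_, t⟩, ⟨rfl, ht⟩, rfl⟩
  simpa using hzC (-t) (neg_nonneg.2 ht)

theorem mem_compRepeller_of_map_mem (hz : z ∈ S) (hC : IsClosed C) (hCA : Disjoint C A)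
    (hzC : ∀ t, 0 ≤ t → φ (z, t) ∈ C) : z ∈ compRepeller φ S A :=
  ⟨hz, (hCA.mono_left (omegaSet_singleton_subset_s7 hC hzC)).inter_eq⟩

theorem IsAttractorRepellerPair.disjoint (hAR : IsAttractorRepellerPair φ S A R) (h : IsFlow φ)
    (hS : IsCompact S) : Disjoint A R := by
  refine disjoint_left.2 fun x hxA hxR => ?_
  have hA := hAR.1.isFlowInvariant h
  have hxA' : ∀ t, 0 ≤ t → φ (x, t) ∈ A := fun t _ => hA x hxA t
  obtain ⟨q, hq⟩ := omegaSet_singleton_nonempty h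
    (hS.of_isClosed_subset (hAR.1.isClosed h) hAR.1.1) hxA'
  rw [hAR.2.2.2] at hxR
  exact eq_empty_iff_forall_notMem.1 hxR.2 q
    ⟨hq, omegaSet_singleton_subset_s7 (hAR.1.isClosed h) hxA' hq⟩

def unattractedSet (φ : Γ × ℝ → Γ) (U A : Set Γ) : Set Γ :=
  {y | (∀ t, 0 ≤ t → φ (y, t) ∈ U) ∧ Disjoint (closure (φ '' ({y} ×ˢ Ici 0))) A}

variable [T2Space Γ] {K₀ : Set Γ}

theorem exists_map_not_mem_of_mem_unattractedSet (h : IsFlow φ) (hUS : maxInv φ U = S)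
    (hAR : compAttractor φ S R ⊆ A) (hK₀ : IsCompact K₀) (hK₀U : K₀ ⊆ U) (hK₀R : Disjoint K₀ R)
    (hy : y ∈ unattractedSet φ U A) : ∃ t, 0 ≤ t ∧ φ (y, t) ∉ K₀ := by
  by_contra! hyK₀
  obtain ⟨q, hq⟩ := omegaSet_singleton_nonempty h hK₀ hyK₀
  have hqK₀ (t : ℝ) : φ (q, t) ∈ K₀ :=
    omegaSet_singleton_subset_s7 hK₀.isClosed hyK₀ (isFlowInvariant_maxInv h q hq t)
  have hqS : q ∈ S := hUS ▸ mem_maxInv_of_nonneg h (fun t _ => hK₀U (hqK₀ t))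
    fun t _ => hK₀U (hqK₀ (-t))
  exact disjoint_left.1 hy.2 hq.1
    (hAR (mem_compAttractor_of_map_neg_mem hqS hK₀.isClosed hK₀R fun t _ => hqK₀ (-t)))

theorem disjoint_closure_unattractedSet (h : IsFlow φ) (hUc : IsClosed U) (hUS : maxInv φ U = S)
    (hAR : compAttractor φ S R ⊆ A) (hA : IsFlowInvariant φ A) (hK₀ : IsCompact K₀)
    (hK₀U : K₀ ⊆ U) (hK₀R : Disjoint K₀ R) (hAK₀ : A ⊆ interior K₀) :
    Disjoint A (closure (unattractedSet φ U A)) := by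
  refine disjoint_left.2 fun a ha hacl => ?_
  -- unattracted points shadowing the orbit of `a` inside `K₀` for longer and longer times
  have hy (n : ℕ) : ∃ y ∈ unattractedSet φ U A, StaysIn φ K₀ y n := by
    obtain ⟨y, hyO, hy⟩ := mem_closure_iff.1 hacl _ (isOpen_setOf_staysIn h isOpen_interior n)
      fun s _ => hAK₀ (hA a ha s)
    exact ⟨y, hy, hyO.mono_set interior_subset⟩
  choose y hyB hyK₀ using hy
  have he (n : ℕ) : ∃ e, (n : ℝ) ≤ e ∧ StaysIn φ K₀ (y n) e ∧ φ (y n, e) ∉ interior K₀ := by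
    obtain ⟨t, ht, hyt⟩ :=
      exists_map_not_mem_of_mem_unattractedSet h hUS hAR hK₀ hK₀U hK₀R (hyB n)
    obtain ⟨e, he, hye, hyint⟩ := exists_exit_time h hK₀.isClosed n.cast_nonneg (hyK₀ n)
      fun hs => hyt (hs t ⟨ht, le_rfl⟩)
    exact ⟨e, he.1, hye, hyint⟩
  choose e hen hye hyint using he
  -- their exit points from `K₀` accumulate at a point of `S` with backward orbit in `K₀`
  obtain ⟨z, -, hz⟩ := hK₀.exists_mapClusterPt (f := atTop) (u := fun n => φ (y n, e n))
    (tendsto_principal.2 (Eventually.of_forall fun n =>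
      hye n (e n) ⟨n.cast_nonneg.trans (hen n), le_rfl⟩))
  have hzK₀ (t : ℝ) (ht : 0 ≤ t) : φ (z, -t) ∈ K₀ := h.mem_of_mapClusterPt hz hK₀.isClosed
    ((tendsto_natCast_atTop_atTop.eventually_ge_atTop t).mono fun n hn => by
      rw [h.map_map]
      exact hye n _ ⟨by linarith [hen n], by linarith⟩)
  have hzU (t : ℝ) (ht : 0 ≤ t) : φ (z, t) ∈ U := h.mem_of_mapClusterPt hz hUc
    (Eventually.of_forall fun n => by
      rw [h.map_map]
      exact (hyB n).1 _ (by linarith [hen n, (n.cast_nonneg : (0 : ℝ) ≤ n)]))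
  have hzA : z ∈ A := hAR (mem_compAttractor_of_map_neg_mem
    (hUS ▸ mem_maxInv_of_nonneg h hzU fun t ht => hK₀U (hzK₀ t ht)) hK₀.isClosed hK₀R hzK₀)
  exact isOpen_interior.isClosed_compl.mem_of_mapClusterPt hz (Eventually.of_forall hyint)
    (hAK₀ hzA)

theorem exists_long_excursion {KA : Set Γ} {r : Γ} (h : IsFlow φ) (hUc : IsClosed U)
    (hKA : IsCompact KA) (hr : ∀ t, φ (r, t) ∉ KA) (hrcl : r ∈ closure (forwardOrbitIn φ U KA))
    (T : ℝ) : ∃ m ∈ KA, StaysIn φ U m T ∧ ∀ s ∈ Ioc 0 T, φ (m, s) ∉ KA := by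
  have hrQ : r ∉ {y | ∃ x ∈ KA, ∃ t ∈ Icc 0 T, StaysIn φ U x t ∧ φ (x, t) = y} := by
    rintro ⟨x, hx, t, -, -, rfl⟩
    exact hr (-t) (by rwa [h.map_map_neg])
  obtain ⟨_, hyQ, x, hx, t, ht, hxt, rfl⟩ := mem_closure_iff.1 hrcl _
    (isCompact_forwardOrbitIn_Icc h hUc hKA T).isClosed.isOpen_compl hrQ
  obtain ⟨σ, hσ, hxσ, hlast⟩ := exists_last_mem h hKA.isClosed hx ht
  have hgap : T < t - σ := lt_of_not_ge fun hle => hyQ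
    ⟨φ (x, σ), hxσ, t - σ, ⟨sub_nonneg.2 hσ.2, hle⟩, hxt.shift h hσ, by
      rw [h.map_map, add_sub_cancel]⟩
  refine ⟨φ (x, σ), hxσ, (hxt.shift h hσ).mono hgap.le, fun s hs => ?_⟩
  rw [h.map_map]
  exact hlast _ ⟨by linarith [hs.1], by linarith [hs.2]⟩

theorem disjoint_closure_forwardOrbitIn {KA : Set Γ} (h : IsFlow φ) (hUc : IsClosed U)
    (hA : IsFlowInvariant φ A) (hR : IsFlowInvariant φ R) (hKA : IsCompact KA) (hKAU : KA ⊆ U)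
    (hKAR : Disjoint KA R) (hKAA : Disjoint KA (unattractedSet φ U A)) (hAKA : A ⊆ interior KA) :
    Disjoint R (closure (forwardOrbitIn φ U KA)) := by
  refine disjoint_left.2 fun r hr hrcl => ?_
  choose m hmKA hmU hmout using fun n : ℕ => exists_long_excursion h hUc hKA
    (fun t hrt => disjoint_left.1 hKAR hrt (hR r hr t)) hrcl n
  -- a limit of longer and longer excursions lies in `KA` and is unattracted
  obtain ⟨m₀, hm₀, hm₀c⟩ := hKA.exists_mapClusterPt (f := atTop)
    (tendsto_principal.2 (Eventually.of_forall hmKA))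
  have hfwd (v : ℝ) (hv : 0 < v) : φ (m₀, v) ∈ U ∩ (interior KA)ᶜ :=
    h.mem_of_mapClusterPt hm₀c (hUc.inter isOpen_interior.isClosed_compl)
      ((tendsto_natCast_atTop_atTop.eventually_ge_atTop v).mono fun n hn =>
        ⟨hmU n v ⟨hv.le, hn⟩, fun hint => hmout n v ⟨hv, hn⟩ (interior_subset hint)⟩)
  have hm₀A : m₀ ∉ A := fun hm₀A => (hfwd 1 one_pos).2 (hAKA (hA _ hm₀A 1))
  have horbit : φ '' ({m₀} ×ˢ Ici 0) ⊆ {m₀} ∪ (U ∩ (interior KA)ᶜ) := by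
    rintro _ ⟨⟨_, t⟩, ⟨rfl, ht⟩, rfl⟩
    rcases (mem_Ici.1 ht).eq_or_lt with rfl | ht
    · exact Or.inl (h.map_zero _)
    · exact Or.inr (hfwd t ht)
  refine disjoint_left.1 hKAA hm₀ ⟨fun t ht => ?_, ?_⟩
  · rcases ht.eq_or_lt with rfl | ht
    · rw [h.map_zero]
      exact hKAU hm₀
    · exact (hfwd t ht).1
  · refine Disjoint.mono_left (closure_minimal horbit (isClosed_singleton.union
      (hUc.inter isOpen_interior.isClosed_compl))) ?_
    exact disjoint_union_left.2 ⟨disjoint_singleton_left.2 hm₀A,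
      disjoint_left.2 fun x hx hxA => hx.2 (hAKA hxA)⟩

end AttractorRepeller

section GInvariant

variable {G : Type*} [Group G] [MulAction G Γ]

protected theorem IsGInvariant.closure [ContinuousConstSMul G Γ] (hX : IsGInvariant G X) :
    IsGInvariant G (closure X) :=
  fun g _ hx => map_mem_closure (continuous_const_smul g) hx (hX g)

protected theorem IsGInvariant.interior [ContinuousConstSMul G Γ] (hX : IsGInvariant G X) :
    IsGInvariant G (interior X) :=
  fun g _ hx => interior_mono (smul_set_subset_iff.2 (hX g))
    (by rw [interior_smul]; exact smul_mem_smul_set hx)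

theorem exists_isGInvariant_compact_nhds [TopologicalSpace G] [CompactSpace G]
    [ContinuousSMul G Γ] [LocallyCompactSpace Γ] [T2Space Γ] {S W : Set Γ} (hS : IsCompact S)
    (hSG : IsGInvariant G S) (hW : IsOpen W) (hSW : S ⊆ W) :
    ∃ K, IsCompact K ∧ IsGInvariant G K ∧ S ⊆ interior K ∧ K ⊆ W := by
  obtain ⟨K₀, hK₀, hSK₀, hK₀W⟩ := exists_compact_between hS hW hSW
  have hsub : {x : Γ | ∀ g : G, g • x ∈ K₀} ⊆ K₀ := fun x hx => by simpa using hx 1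
  refine ⟨{x | ∀ g : G, g • x ∈ K₀}, hK₀.of_isClosed_subset ?_ hsub,
    fun g x hx g' => by simpa [smul_smul] using hx (g' * g), fun x hx => ?_, hsub.trans hK₀W⟩
  · simp only [ofPred_forall]
    exact isClosed_iInter fun g => hK₀.isClosed.preimage (continuous_const_smul g)
  -- compactness of `G` makes the neighbourhood of `x` uniform in `g`
  have hx : ∀ᶠ y in 𝓝 x, ∀ g ∈ (univ : Set G), g • y ∈ interior K₀ :=
    isCompact_univ.eventually_forall_of_forall_eventually fun g _ =>
      (continuous_snd.smul continuous_fst).continuousAt.preimage_mem_nhds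
        (isOpen_interior.mem_nhds (hSK₀ (hSG g x hx)))
  exact mem_interior_iff_mem_nhds.2 (hx.mono fun y hy g => interior_subset (hy g (mem_univ g)))

end GInvariant

structure IndexPairData (φ : Γ × ℝ → Γ) (S U K : Set Γ) (T : ℝ) : Prop where
  isFlow : IsFlow φ
  isCompact_U : IsCompact U
  maxInv_eq : maxInv φ U = S
  isCompact_K : IsCompact K
  subset_interior_K : S ⊆ interior K
  K_subset : K ⊆ interior U
  noReturn : NoReturn φ U K
  pos : 0 < T
  crossing : ∀ x, StaysIn φ U x T → ∃ s ∈ Icc 0 T, φ (x, s) ∈ interior K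

def exitSet (φ : Γ × ℝ → Γ) (U K : Set Γ) (T : ℝ) : Set Γ :=
  forwardOrbitIn φ U K \ {x | StaysIn φ (interior U) x T}

theorem exitSet_subset {T : ℝ} : exitSet φ U K T ⊆ forwardOrbitIn φ U K := sdiff_subset

namespace IndexPairData

variable {S A R KA : Set Γ} {T : ℝ}

theorem isFlowInvariant (hd : IndexPairData φ S U K T) : IsFlowInvariant φ S :=
  hd.maxInv_eq ▸ isFlowInvariant_maxInv hd.isFlow

theorem subset_setOf_staysIn (hd : IndexPairData φ S U K T) :
    S ⊆ {x | StaysIn φ (interior U) x T} :=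
  fun x hx s _ => hd.K_subset (interior_subset (hd.subset_interior_K (hd.isFlowInvariant x hx s)))

theorem interior_subset_forwardOrbitIn (hd : IndexPairData φ S U K T) :
    interior K ⊆ forwardOrbitIn φ U K :=
  interior_subset.trans (subset_forwardOrbitIn hd.isFlow (hd.K_subset.trans interior_subset))

theorem inter_setOf_staysIn_mem_nhdsSet (hd : IndexPairData φ S U K T) (hV : IsOpen V)
    (hXV : X ⊆ V) (hXS : X ⊆ S) : V ∩ {x | StaysIn φ (interior U) x T} ∈ 𝓝ˢ X :=
  (hV.inter (isOpen_setOf_staysIn hd.isFlow isOpen_interior T)).mem_nhdsSet.2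
    fun _ hx => ⟨hXV hx, hd.subset_setOf_staysIn (hXS hx)⟩

protected theorem isCompact_forwardOrbitIn [T2Space Γ] (hd : IndexPairData φ S U K T) :
    IsCompact (forwardOrbitIn φ U K) :=
  isCompact_forwardOrbitIn hd.isFlow hd.isCompact_U hd.isCompact_U.isClosed hd.isCompact_K
    (hd.maxInv_eq ▸ hd.subset_interior_K)

theorem isCompact_exitSet [T2Space Γ] (hd : IndexPairData φ S U K T) :
    IsCompact (exitSet φ U K T) :=
  hd.isCompact_forwardOrbitIn.of_isClosed_subset (hd.isCompact_forwardOrbitIn.isClosed.sdiff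
    (isOpen_setOf_staysIn hd.isFlow isOpen_interior T)) exitSet_subset

theorem closure_forwardOrbitIn_subset [T2Space Γ] (hd : IndexPairData φ S U K T) (hKA : KA ⊆ K) :
    closure (forwardOrbitIn φ U KA) ⊆ forwardOrbitIn φ U K :=
  closure_minimal (forwardOrbitIn_mono hKA) hd.isCompact_forwardOrbitIn.isClosed

theorem exitSet_union_subset [T2Space Γ] (hd : IndexPairData φ S U K T) (hKA : KA ⊆ K) :
    exitSet φ U K T ∪ closure (forwardOrbitIn φ U KA) ⊆ forwardOrbitIn φ U K :=
  union_subset exitSet_subset (hd.closure_forwardOrbitIn_subset hKA)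

theorem maxInv_closure_subset [T2Space Γ] (hd : IndexPairData φ S U K T)
    (hX : X ⊆ forwardOrbitIn φ U K) : maxInv φ (closure X) ⊆ S :=
  hd.maxInv_eq ▸ maxInv_mono_s7 (closure_minimal (hX.trans forwardOrbitIn_subset)
    hd.isCompact_U.isClosed)

/-- Staying in `interior U` for time `T` would bring the orbit back to `K`. -/
theorem map_mem_exitSet_of_not_mem_interior (hd : IndexPairData φ S U K T)
    (hy : y ∈ forwardOrbitIn φ U K) (hyU : y ∉ interior U) (ht : 0 ≤ t) (hyt : StaysIn φ U y t) :
    φ (y, t) ∈ exitSet φ U K T := by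
  refine ⟨staysIn_forwardOrbitIn hd.isFlow hy hyt t ⟨ht, le_rfl⟩, fun htube => ?_⟩
  obtain ⟨s, hs, hsK⟩ := hd.crossing _ (htube.mono_set interior_subset)
  have hret : y ∈ backwardOrbitIn φ U K := (mem_backwardOrbitIn hd.isFlow).2
    ⟨t + s, by linarith [hs.1], hyt.append hd.isFlow ((htube.mono hs.2).mono_set interior_subset),
      by rw [← hd.isFlow.map_map]; exact interior_subset hsK⟩
  exact disjoint_left.1 hd.noReturn ⟨hy, hyU⟩ hret

theorem map_mem_exitSet (hd : IndexPairData φ S U K T) (hx : x ∈ exitSet φ U K T) (ht : 0 ≤ t)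
    (hxt : StaysIn φ U x t) : φ (x, t) ∈ exitSet φ U K T := by
  have h := hd.isFlow
  obtain ⟨hxL, hxD⟩ := hx
  obtain ⟨u, hu, hxu⟩ := not_staysIn_iff.1 hxD
  rcases le_total u t with hut | htu
  · have := hd.map_mem_exitSet_of_not_mem_interior
      (staysIn_forwardOrbitIn h hxL hxt u ⟨hu.1, hut⟩) hxu (sub_nonneg.2 hut)
      (hxt.shift h ⟨hu.1, hut⟩)
    rwa [h.map_map, add_sub_cancel] at this
  · refine ⟨staysIn_forwardOrbitIn h hxL hxt t ⟨ht, le_rfl⟩, fun htube => hxu ?_⟩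
    have := htube (u - t) ⟨sub_nonneg.2 htu, by linarith [hu.2]⟩
    rwa [h.map_map, add_sub_cancel] at this

theorem exists_map_mem_exitSet [T2Space Γ] (hd : IndexPairData φ S U K T)
    (hx : x ∈ forwardOrbitIn φ U K) (hxt : ¬ StaysIn φ U x t) :
    ∃ s ∈ Icc 0 t, φ (x, s) ∈ exitSet φ U K T := by
  obtain ⟨e, he, hxe, hexit⟩ := exists_exit_time hd.isFlow hd.isCompact_U.isClosed le_rfl
    ((staysIn_zero hd.isFlow).2 (forwardOrbitIn_subset hx)) hxt
  refine ⟨e, he, staysIn_forwardOrbitIn hd.isFlow hx hxe e ⟨he.1, le_rfl⟩, fun htube => hexit ?_⟩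
  simpa [hd.isFlow.map_zero] using htube 0 ⟨le_rfl, hd.pos.le⟩

theorem isIndexPair [T2Space Γ] (hd : IndexPairData φ S U K T) :
    IsIndexPair φ S (forwardOrbitIn φ U K) (exitSet φ U K T) := by
  have hL := hd.isCompact_forwardOrbitIn
  refine ⟨hL, hd.isCompact_exitSet, exitSet_subset, isIsolatingNbhd_closure
    (hL.closure_of_subset sdiff_subset) ?_ hd.isFlowInvariant
    (hd.maxInv_closure_subset sdiff_subset),
    fun x hx t _ hxt s hs => ?_, fun x hx t ht hxt => ?_⟩
  · exact mem_of_superset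
      (hd.inter_setOf_staysIn_mem_nhdsSet isOpen_interior hd.subset_interior_K subset_rfl)
      fun x hx => ⟨hd.interior_subset_forwardOrbitIn hx.1, fun hN => hN.2 hx.2⟩
  · exact hd.map_mem_exitSet hx hs.1
      fun u hu => forwardOrbitIn_subset (hxt u ⟨hu.1, hu.2.trans hs.2⟩)
  · exact hd.exists_map_mem_exitSet hx fun hxU =>
      hxt (staysIn_forwardOrbitIn hd.isFlow hx hxU t ⟨ht, le_rfl⟩)

theorem map_mem_exitSet_union [T2Space Γ] (hd : IndexPairData φ S U K T) (hKA : KA ⊆ K)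
    (hx : x ∈ exitSet φ U K T ∪ closure (forwardOrbitIn φ U KA)) (ht : 0 ≤ t)
    (hxt : StaysIn φ U x t) : φ (x, t) ∈ exitSet φ U K T ∪ closure (forwardOrbitIn φ U KA) := by
  have h := hd.isFlow
  rcases hx with hx | hx
  · exact Or.inl (hd.map_mem_exitSet hx ht hxt)
  by_cases hint : StaysIn φ (interior U) x t
  · exact Or.inr (map_mem_closure_forwardOrbitIn h hx ht hint)
  obtain ⟨u, hu, hxu⟩ := not_staysIn_iff.1 hint
  have := hd.map_mem_exitSet_of_not_mem_interior (staysIn_forwardOrbitIn h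
    (hd.closure_forwardOrbitIn_subset hKA hx) hxt u hu) hxu (sub_nonneg.2 hu.2) (hxt.shift h hu)
  rw [h.map_map, add_sub_cancel] at this
  exact Or.inl this

theorem isIndexPair_repeller [T2Space Γ] (hd : IndexPairData φ S U K T)
    (hAR : IsAttractorRepellerPair φ S A R) (hKA : KA ⊆ K) (hAKA : A ⊆ interior KA)
    (hRKA : Disjoint R (closure (forwardOrbitIn φ U KA))) :
    IsIndexPair φ R (forwardOrbitIn φ U K) (exitSet φ U K T ∪ closure (forwardOrbitIn φ U KA)) := by
  obtain ⟨hL, hN, -, -, -, hexit⟩ := hd.isIndexPair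
  have hRS : R ⊆ S := hAR.2.1.1
  have hML := hd.exitSet_union_subset hKA
  have hMc := hN.isClosed.union (isClosed_closure (s := forwardOrbitIn φ U KA))
  have hLM : forwardOrbitIn φ U K \ (exitSet φ U K T ∪ closure (forwardOrbitIn φ U KA)) ⊆
      (interior KA)ᶜ := fun y hy hyKA => hy.2 (Or.inr (subset_closure
    (subset_forwardOrbitIn hd.isFlow (hKA.trans (hd.K_subset.trans interior_subset))
      (interior_subset hyKA))))
  refine ⟨hL, hL.of_isClosed_subset hMc hML, hML, isIsolatingNbhd_closure
    (hL.closure_of_subset sdiff_subset) ?_ (hAR.2.1.isFlowInvariant hd.isFlow) fun z hz => ?_,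
    fun x hx t _ hxt s hs => ?_, fun x hx t ht hxt => ?_⟩
  · refine mem_of_superset (inter_mem (hd.inter_setOf_staysIn_mem_nhdsSet isOpen_interior
      (hRS.trans hd.subset_interior_K) hRS) (hMc.isOpen_compl.mem_nhdsSet.2
      fun x hx hxM => ?_)) fun x hx => ⟨hd.interior_subset_forwardOrbitIn hx.1.1, hx.2⟩
    rcases hxM with hxN | hxP
    · exact hxN.2 (hd.subset_setOf_staysIn (hRS hx))
    · exact disjoint_left.1 hRKA hx hxP
  · rw [hAR.2.2.2]
    exact mem_compRepeller_of_map_mem (hd.maxInv_closure_subset sdiff_subset hz)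
      isOpen_interior.isClosed_compl (disjoint_compl_left_iff_subset.2 hAKA)
      fun t _ => closure_minimal hLM isOpen_interior.isClosed_compl (hz.2 t)
  · exact hd.map_mem_exitSet_union hKA hx hs.1
      fun u hu => forwardOrbitIn_subset (hxt u ⟨hu.1, hu.2.trans hs.2⟩)
  · obtain ⟨s, hs, hxs⟩ := hexit x hx t ht hxt
    exact ⟨s, hs, Or.inl hxs⟩

theorem isIndexPair_attractor [T2Space Γ] (hd : IndexPairData φ S U K T)
    (hAR : IsAttractorRepellerPair φ S A R) (hKA : KA ⊆ K) (hAKA : A ⊆ interior KA)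
    (hRKA : Disjoint R (closure (forwardOrbitIn φ U KA))) :
    IsIndexPair φ A (exitSet φ U K T ∪ closure (forwardOrbitIn φ U KA)) (exitSet φ U K T) := by
  obtain ⟨hL, hN, -, -, hNinv, -⟩ := hd.isIndexPair
  have hML := hd.exitSet_union_subset hKA
  have hM := hL.of_isClosed_subset (hN.isClosed.union isClosed_closure) hML
  have hMN : (exitSet φ U K T ∪ closure (forwardOrbitIn φ U KA)) \ exitSet φ U K T ⊆
      closure (forwardOrbitIn φ U KA) := fun x hx => hx.1.resolve_left hx.2
  refine ⟨hM, hN, subset_union_left, isIsolatingNbhd_closure (hM.closure_of_subset sdiff_subset) ?_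
    (hAR.1.isFlowInvariant hd.isFlow) fun z hz => ?_,
    fun x hx t ht hxt => hNinv x hx t ht fun s hs => hML (hxt s hs), fun x hx t ht hxt => ?_⟩
  · refine mem_of_superset (hd.inter_setOf_staysIn_mem_nhdsSet isOpen_interior hAKA hAR.1.1)
      fun x hx => ⟨Or.inr (subset_closure ?_), fun hxN => hxN.2 hx.2⟩
    exact subset_forwardOrbitIn hd.isFlow (hKA.trans (hd.K_subset.trans interior_subset))
      (interior_subset hx.1)
  · rw [hAR.2.2.1]
    exact mem_compAttractor_of_map_neg_mem (hd.maxInv_closure_subset (sdiff_subset.trans hML) hz)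
      isClosed_closure hRKA.symm fun t _ => closure_minimal hMN isClosed_closure (hz.2 (-t))
  · exact hd.exists_map_mem_exitSet (hML hx) fun hxU => hxt (hd.map_mem_exitSet_union hKA hx ht hxU)

end IndexPairData

section Existence

variable {G : Type*} [TopologicalSpace G] [Group G] [CompactSpace G] [MulAction G Γ]
  [ContinuousSMul G Γ] [LocallyCompactSpace Γ] [T2Space Γ] {S A R W : Set Γ}

theorem IsIsolatedInvariantSet.exists_indexPairData (hS : IsIsolatedInvariantSet φ S)
    (h : IsFlow φ) (hSG : IsGInvariant G S) :
    ∃ U K T, IndexPairData φ S U K T ∧ IsGInvariant G U ∧ IsGInvariant G K := by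
  obtain ⟨hSc, U₀, -, hU₀, hU₀S⟩ := hS
  obtain ⟨U, hU, hUG, hSU, hUU₀⟩ := exists_isGInvariant_compact_nhds hSc hSG isOpen_interior
    (subset_interior_iff_mem_nhdsSet.2 hU₀)
  have hUS : maxInv φ U = S := (hU₀S ▸ maxInv_mono_s7 (hUU₀.trans interior_subset)).antisymm
    ((hU₀S ▸ isFlowInvariant_maxInv h).subset_maxInv (hSU.trans interior_subset))
  obtain ⟨K₁, -, hSK₁, hK₁U, hK₁⟩ := exists_noReturn h hU (hUS ▸ hSU)
  obtain ⟨K, hK, hKG, hSK, hKK₁⟩ :=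
    exists_isGInvariant_compact_nhds hSc hSG isOpen_interior (hUS ▸ hSK₁)
  obtain ⟨T, hT, hcross⟩ := exists_crossing_time h hU hU.isClosed isOpen_interior (hUS ▸ hSK)
  exact ⟨U, K, T, ⟨h, hU, hUS, hK, hSK, hKK₁.trans (interior_subset.trans hK₁U),
    hK₁.mono (hKK₁.trans interior_subset), hT, hcross⟩, hUG, hKG⟩

theorem IsAttractorRepellerPair.exists_isGInvariant_nhds {U : Set Γ}
    (hAR : IsAttractorRepellerPair φ S A R) (h : IsFlow φ) (hU : IsCompact U)
    (hUS : maxInv φ U = S) (hAG : IsGInvariant G A) (hW : IsOpen W) (hAW : A ⊆ W) (hWU : W ⊆ U) :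
    ∃ KA, IsGInvariant G KA ∧ A ⊆ interior KA ∧ KA ⊆ W ∧
      Disjoint R (closure (forwardOrbitIn φ U KA)) := by
  have hS : IsCompact S := hUS ▸ hU.of_isClosed_subset (isClosed_maxInv h hU.isClosed) maxInv_subset
  have hA : IsCompact A := hS.of_isClosed_subset (hAR.1.isClosed h) hAR.1.1
  have hAR' : A ⊆ W ∩ Rᶜ := fun x hx => ⟨hAW hx, disjoint_left.1 (hAR.disjoint h hS) hx⟩
  obtain ⟨K₀, hK₀, hAK₀, hK₀W⟩ :=
    exists_compact_between hA (hW.inter (hAR.2.1.isClosed h).isOpen_compl) hAR'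
  have hbad := disjoint_closure_unattractedSet h hU.isClosed hUS hAR.2.2.1.ge
    (hAR.1.isFlowInvariant h) hK₀ (fun x hx => hWU (hK₀W hx).1)
    (disjoint_left.2 fun x hx => (hK₀W hx).2) hAK₀
  obtain ⟨KA, hKA, hKAG, hAKA, hKAW⟩ := exists_isGInvariant_compact_nhds hA hAG
    ((hW.inter (hAR.2.1.isClosed h).isOpen_compl).inter isClosed_closure.isOpen_compl)
    fun x hx => ⟨hAR' hx, disjoint_left.1 hbad hx⟩
  refine ⟨KA, hKAG, hAKA, fun x hx => (hKAW hx).1.1, disjoint_closure_forwardOrbitIn h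
    hU.isClosed (hAR.1.isFlowInvariant h) (hAR.2.1.isFlowInvariant h) hKA
    (fun x hx => hWU (hKAW hx).1.1) (disjoint_left.2 fun x hx => (hKAW hx).1.2)
    (disjoint_left.2 fun x hx hxB => (hKAW hx).2 (subset_closure hxB)) hAKA⟩

end Existence

end

theorem exists_equivariant_index_triple_general
    {Γ : Type*} [TopologicalSpace Γ] [LocallyCompactSpace Γ] [T2Space Γ]
    {G : Type*} [TopologicalSpace G] [Group G]
    [CompactSpace G] [MulAction G Γ] [ContinuousSMul G Γ]
    (φ : Γ × ℝ → Γ) (hφ : IsFlow φ)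
    (hequiv : ∀ (g : G) (x : Γ) (t : ℝ), φ (g • x, t) = g • φ (x, t))
    (S : Set Γ) (hS : IsIsolatedInvariantSet φ S)
    (hSinv : ∀ (g : G), ∀ x ∈ S, g • x ∈ S)
    (A R : Set Γ) (hAR : IsAttractorRepellerPair φ S A R)
    (hAinv : ∀ (g : G), ∀ x ∈ A, g • x ∈ A) :
    ∃ L M N : Set Γ, N ⊆ M ∧ M ⊆ L ∧
      (∀ (g : G), ∀ x ∈ L, g • x ∈ L) ∧ (∀ (g : G), ∀ x ∈ M, g • x ∈ M) ∧
      (∀ (g : G), ∀ x ∈ N, g • x ∈ N) ∧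
      IsIndexPair φ R L M ∧ IsIndexPair φ S L N ∧ IsIndexPair φ A M N := by
  obtain ⟨U, K, T, hd, hUG, hKG⟩ := hS.exists_indexPairData hφ hSinv
  obtain ⟨KA, hKAG, hAKA, hKAK, hRKA⟩ := hAR.exists_isGInvariant_nhds hφ hd.isCompact_U
    hd.maxInv_eq hAinv isOpen_interior (hAR.1.1.trans hd.subset_interior_K)
    (interior_subset.trans (hd.K_subset.trans interior_subset))
  have hKA : KA ⊆ K := hKAK.trans interior_subset
  have hNG : IsGInvariant G (exitSet φ U K T) :=
    (hUG.forwardOrbitIn hequiv hKG).diff (hUG.interior.setOf_staysIn hequiv)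
  exact ⟨_, _, _, subset_union_left, hd.exitSet_union_subset hKA, hUG.forwardOrbitIn hequiv hKG,
    hNG.union (hUG.forwardOrbitIn hequiv hKAG).closure, hNG,
    hd.isIndexPair_repeller hAR hKA hAKA hRKA, hd.isIndexPair,
    hd.isIndexPair_attractor hAR hKA hAKA hRKA⟩

/-- **Equivariant existence of index triples**: for a `G`-equivariant flow on a locally compact
Hausdorff `G`-space and a `G`-invariant attractor-repeller pair `(A, R)` in a `G`-invariant
isolated invariant set `S`, there exist compact `G`-invariant sets `N ⊆ M ⊆ L` such that
`(L, M)` is an index pair for `R`, `(L, N)` is an index pair for `S`, and `(M, N)` is an index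
pair for `A`. -/
theorem exists_equivariant_index_triple
    {Γ : Type*} [TopologicalSpace Γ] [LocallyCompactSpace Γ] [T2Space Γ]
    {E : Type*} [NormedAddCommGroup E] [NormedSpace ℝ E]
    {H : Type*} [TopologicalSpace H] (I : ModelWithCorners ℝ E H)
    {G : Type*} [TopologicalSpace G] [ChartedSpace H G] [Group G] [LieGroup I (⊤ : ℕ∞) G]
    [CompactSpace G] [MulAction G Γ] [ContinuousSMul G Γ]
    (φ : Γ × ℝ → Γ) (hφ : IsFlow φ)
    (hequiv : ∀ (g : G) (x : Γ) (t : ℝ), φ (g • x, t) = g • φ (x, t))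
    (S : Set Γ) (hS : IsIsolatedInvariantSet φ S)
    (hSinv : ∀ (g : G), ∀ x ∈ S, g • x ∈ S)
    (A R : Set Γ) (hAR : IsAttractorRepellerPair φ S A R)
    (hAinv : ∀ (g : G), ∀ x ∈ A, g • x ∈ A) (hRinv : ∀ (g : G), ∀ x ∈ R, g • x ∈ R) :
    ∃ L M N : Set Γ, N ⊆ M ∧ M ⊆ L ∧
      (∀ (g : G), ∀ x ∈ L, g • x ∈ L) ∧ (∀ (g : G), ∀ x ∈ M, g • x ∈ M) ∧
      (∀ (g : G), ∀ x ∈ N, g • x ∈ N) ∧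
      IsIndexPair φ R L M ∧ IsIndexPair φ S L N ∧ IsIndexPair φ A M N :=
  exists_equivariant_index_triple_general φ hφ hequiv S hS hSinv A R hAR hAinv
end
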